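/- arXiv:math/0203028 — 5 statements merged into one kernel-verified Lean document; each statement's English description precedes it below -/
import Mathlib

section
/- Let n ≥ 2 and let p be an integer with 1 ≤ p ≤ n − 1 and gcd(p, n) = 1. Let α = (1/n, (n−1)/n) and β = (p/n, (n−p)/n). Then the arrangements 𝒜(α) and 𝒜(β) in (ℝ²)ⁿ are weakly D_{2n}-isomorphic: there exist a nonsingular linear map C : (ℝ²)ⁿ → (ℝ²)ⁿ and an automorphism θ of D_{2n} with θ(E) = E and θ(J) = J E^{−p−1}, such that C(g·x) = θ(g)·C(x) for all g ∈ D_{2n} and x ∈ (ℝ²)ⁿ, and C maps the members of 𝒜(β) bijectively onto the members of 𝒜(α). -/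
/- STATEMENT 7: For 1 ≤ p ≤ n−1 with gcd(p,n) = 1, the arrangements 𝒜(α) (generated by the
kernels of the coordinate projections x_i) and 𝒜(β) (generated by the kernels of
y_i = x_{i+1} + ⋯ + x_{i+p}) in (ℝ²)ⁿ are weakly D_{2n}-isomorphic, via a nonsingular linear
map C and the automorphism θ of D_{2n} with θ(E) = E, θ(J) = J·E^{−p−1}. -/

noncomputable section

/-- (ℝ²)ⁿ with coordinates indexed cyclically by ZMod n. -/
abbrev Mat (n : ℕ) : Type := ZMod n → ℝ × ℝ

/-- Index permutation realizing the dihedral action: `E = r 1` shifts cyclically,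
`J = sr 0` reverses. -/
def dperm {n : ℕ} : DihedralGroup n → ZMod n → ZMod n
  | DihedralGroup.r i => fun t => t + i
  | DihedralGroup.sr i => fun t => i - 1 - t

/-- The (left, linear) action of D_{2n} on (ℝ²)ⁿ. -/
def dAct {n : ℕ} (g : DihedralGroup n) (x : Mat n) : Mat n :=
  fun t => x (dperm g t)

/-- The coordinate projection x_i : (ℝ²)ⁿ → ℝ². -/
def xproj (n : ℕ) (i : ZMod n) : Mat n →ₗ[ℝ] ℝ × ℝ :=
  LinearMap.proj i

/-- The linear map y_i = x_{i+1} + ⋯ + x_{i+p} (indices mod n). -/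
def yproj (n p : ℕ) (i : ZMod n) : Mat n →ₗ[ℝ] ℝ × ℝ :=
  ∑ s ∈ Finset.range p, LinearMap.proj (i + (s : ZMod n) + 1)

/-- The arrangement generated by the kernels of the maps `F i`: all intersections of
nonempty subfamilies of {Ker (F i)}. -/
def arr (n : ℕ) [NeZero n] (F : ZMod n → (Mat n →ₗ[ℝ] ℝ × ℝ)) :
    Set (Submodule ℝ (Mat n)) :=
  {K | ∃ S : Finset (ZMod n), S.Nonempty ∧ K = ⨅ i ∈ S, LinearMap.ker (F i)}

/-- The linear map `C` with `x_i ∘ C = y_i`. -/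
def Clin (n p : ℕ) : Mat n →ₗ[ℝ] Mat n := LinearMap.pi (yproj n p)

lemma Clin_apply (n p : ℕ) (x : Mat n) (t : ZMod n) :
    Clin n p x t = ∑ s ∈ Finset.range p, x (t + (s : ZMod n) + 1) := by
  simp [Clin, yproj]

lemma Clin_injective (n p : ℕ) [NeZero n] (hp1 : 1 ≤ p) (hgcd : Nat.gcd p n = 1) :
    Function.Injective (Clin n p) := by
  rw [← LinearMap.ker_eq_bot, LinearMap.ker_eq_bot']
  intro x hx
  have hy : ∀ i : ZMod n, ∑ s ∈ Finset.range p, x (i + (s : ZMod n) + 1) = 0 := by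
    intro i
    have := congrFun hx i
    simpa [Clin, yproj] using this
  have hshift : ∀ u : ZMod n, x (u + p) = x u := by
    intro u
    have h1 := hy (u - 1)
    have h2 := hy u
    have e1 : ∑ s ∈ Finset.range p, x (u - 1 + (s : ZMod n) + 1)
        = ∑ s ∈ Finset.range p, x (u + (s : ZMod n)) := by
      apply Finset.sum_congr rfl; intro s _; ring_nf
    rw [e1] at h1
    have h2' : ∑ s ∈ Finset.range p, x (u + (s+1 : ℕ)) = 0 := by
      simpa [add_assoc] using h2
    have h1' : ∑ s ∈ Finset.range p, x (u + (s : ℕ)) = 0 := h1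
    have key : x (u + (p : ℕ)) - x (u + (0 : ℕ)) = 0 := by
      have := sub_eq_zero_of_eq (h2'.trans h1'.symm)
      rw [← Finset.sum_sub_distrib] at this
      calc x (u + (p:ℕ)) - x (u + (0:ℕ))
          = ∑ s ∈ Finset.range p, (x (u + (s+1:ℕ)) - x (u + (s:ℕ))) := by
            rw [Finset.sum_range_sub (fun s => x (u + (s:ℕ)))]
        _ = 0 := this
    have := sub_eq_zero.mp key
    simpa using this
  have hconst : ∀ u : ZMod n, x u = x 0 := by
    have hm : ∀ (m : ℕ) (u : ZMod n), x (u + m * (p : ZMod n)) = x u := by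
      intro m
      induction m with
      | zero => simp
      | succ k ih =>
        intro u
        have : (((k:ℕ)+1 : ℕ) : ZMod n) * p = (k : ZMod n) * p + p := by push_cast; ring
        rw [this, ← add_assoc, hshift, ih]
    intro u
    have hpu : IsUnit (p : ZMod n) := by
      rw [ZMod.isUnit_iff_coprime]
      exact hgcd
    obtain ⟨v, hv⟩ := hpu
    have : u = ((u * v⁻¹).val : ZMod n) * (p : ZMod n) := by
      rw [ZMod.natCast_val, ZMod.cast_id]
      rw [← hv]
      simp [mul_assoc]
    calc x u = x (0 + ((u * v⁻¹).val : ZMod n) * (p:ZMod n)) := by rw [← this, zero_add]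
      _ = x 0 := hm _ 0
  funext u
  have h0 := hy 0
  have : ∑ s ∈ Finset.range p, x ((0:ZMod n) + (s:ZMod n) + 1) = p • x 0 := by
    rw [Finset.sum_congr rfl (fun s _ => hconst _)]
    simp
  rw [this] at h0
  have hx0 : x 0 = 0 := by
    have h' : (p:ℝ) • x 0 = 0 := by
      rw [Nat.cast_smul_eq_nsmul ℝ]; exact h0
    rcases smul_eq_zero.mp h' with h|h
    · exact absurd h (by positivity)
    · exact h
  rw [hconst u, hx0]
  rfl

/-- The automorphism θ with θ(r i) = r i, θ(sr i) = sr (i - (p+1)). -/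
def theta (n p : ℕ) : DihedralGroup n ≃* DihedralGroup n where
  toFun g := match g with
    | DihedralGroup.r i => DihedralGroup.r i
    | DihedralGroup.sr i => DihedralGroup.sr (i - (p+1))
  invFun g := match g with
    | DihedralGroup.r i => DihedralGroup.r i
    | DihedralGroup.sr i => DihedralGroup.sr (i + (p+1))
  left_inv g := by cases g <;> simp
  right_inv g := by cases g <;> simp
  map_mul' a b := by
    cases a <;> cases b <;>
      simp only [DihedralGroup.r_mul_r, DihedralGroup.r_mul_sr,
        DihedralGroup.sr_mul_r, DihedralGroup.sr_mul_sr,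
        DihedralGroup.r.injEq, DihedralGroup.sr.injEq] <;> ring

theorem arrangements_weakly_dihedral_isomorphic
    (n p : ℕ) [NeZero n] (hn : 2 ≤ n) (hp1 : 1 ≤ p) (hp2 : p ≤ n - 1)
    (hgcd : Nat.gcd p n = 1) :
    ∃ C : Mat n ≃ₗ[ℝ] Mat n, ∃ θ : DihedralGroup n ≃* DihedralGroup n,
      θ (DihedralGroup.r 1) = DihedralGroup.r 1 ∧
      θ (DihedralGroup.sr 0) =
        DihedralGroup.sr 0 * (DihedralGroup.r 1 : DihedralGroup n) ^ (-(p : ℤ) - 1) ∧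
      (∀ (g : DihedralGroup n) (x : Mat n), C (dAct g x) = dAct (θ g) (C x)) ∧
      (∀ K : Submodule ℝ (Mat n),
        K ∈ arr n (yproj n p) ↔ K.map (C : Mat n →ₗ[ℝ] Mat n) ∈ arr n (xproj n)) := by
  have hinj := Clin_injective n p hp1 hgcd
  have hbij : Function.Bijective (Clin n p) :=
    ⟨hinj, (LinearMap.injective_iff_surjective).mp hinj⟩
  set C : Mat n ≃ₗ[ℝ] Mat n := LinearEquiv.ofBijective (Clin n p) hbij with hC
  have hCcoe : (C : Mat n →ₗ[ℝ] Mat n) = Clin n p := rfl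
  refine ⟨C, theta n p, rfl, ?_, ?_, ?_⟩
  · -- θ(sr 0) = sr 0 * (r 1)^(-p-1)
    have h1 : (-(p : ℤ) - 1) = -((p + 1 : ℕ) : ℤ) := by push_cast; ring
    rw [h1, zpow_neg, zpow_natCast, DihedralGroup.r_one_pow]
    have hinv : (DihedralGroup.r ((p+1 : ℕ) : ZMod n) : DihedralGroup n)⁻¹
        = DihedralGroup.r (-((p+1 : ℕ) : ZMod n)) := rfl
    rw [hinv, DihedralGroup.sr_mul_r]
    show DihedralGroup.sr (0 - ((p:ZMod n)+1)) = _
    congr 1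
    push_cast
    ring
  · -- equivariance
    intro g x
    cases g with
    | r j =>
      funext t
      show Clin n p (dAct (DihedralGroup.r j) x) t = dAct (DihedralGroup.r j) (Clin n p x) t
      simp only [Clin_apply, dAct, dperm]
      apply Finset.sum_congr rfl
      intro s _
      congr 1
      ring
    | sr j =>
      funext t
      show Clin n p (dAct (DihedralGroup.sr j) x) t
          = dAct (DihedralGroup.sr (j - ((p:ZMod n)+1))) (Clin n p x) t
      simp only [Clin_apply, dAct, dperm]
      rw [← Finset.sum_range_reflect]
      apply Finset.sum_congr rfl
      intro s hs
      have hs' : s < p := Finset.mem_range.mp hs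
      congr 1
      have h1 : ((p - 1 - s : ℕ) : ZMod n) = (p : ZMod n) - 1 - s := by
        have he : p - 1 - s = p - (1 + s) := by omega
        rw [he, Nat.cast_sub (by omega)]
        push_cast; ring
      rw [h1]
      ring
  · -- arrangements
    have hcomp : ∀ i, (xproj n i).comp (Clin n p) = yproj n p i :=
      fun i => LinearMap.proj_pi _ _
    have hker : ∀ i : ZMod n,
        (LinearMap.ker (yproj n p i)).map (Clin n p) = LinearMap.ker (xproj n i) := by
      intro i
      rw [← hcomp i, LinearMap.ker_comp, Submodule.map_comap_eq_of_surjective hbij.2]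
    have hmap_iInf : ∀ (Q : ZMod n → Submodule ℝ (Mat n)) (S : Finset (ZMod n)),
        (⨅ i ∈ S, Q i).map (Clin n p) = ⨅ i ∈ S, (Q i).map (Clin n p) := by
      intro Q S
      ext z
      have hmem : ∀ (W : Submodule ℝ (Mat n)),
          z ∈ W.map (Clin n p) ↔ C.symm z ∈ W := by
        intro W
        rw [← hCcoe]
        exact Submodule.mem_map_equiv (p := W) (e := C) (x := z)
      simp only [hmem, Submodule.mem_iInf]
    intro K
    constructor
    · rintro ⟨S, hS, rfl⟩
      refine ⟨S, hS, ?_⟩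
      rw [hCcoe, hmap_iInf]
      exact iInf_congr fun i => iInf_congr fun _ => hker i
    · rintro ⟨S, hS, hEq⟩
      refine ⟨S, hS, ?_⟩
      have hmapinj : Function.Injective (Submodule.map (Clin n p)) :=
        Submodule.map_injective_of_injective hinj
      apply hmapinj
      rw [← hCcoe, hEq, hCcoe, hmap_iInf]
      exact iInf_congr fun i => iInf_congr fun _ => (hker i).symm

end
end

section
/- Let n ≥ 1 be odd, let A = ⟨ε²⟩ be the subgroup of the generalized quaternion group Q_{4n} generated by ε², and H = ⟨j⟩ the subgroup generated by j. Then A ∩ H = {1}, and the composite of the inclusion H ↪ Q_{4n} with the quotient homomorphism Q_{4n} → Q_{4n}/A is a group isomorphism of H onto Q_{4n}/A. -/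
open QuaternionGroup Subgroup

private lemma QG_a_pow (n : ℕ) (i : ZMod (2*n)) (k : ℕ) :
    (a i : QuaternionGroup n) ^ k = a ((k : ZMod (2*n)) * i) := by
  induction k with
  | zero => simp
  | succ k ih =>
    rw [pow_succ, ih, a_mul_a]
    congr 1
    push_cast
    ring

private lemma QG_mem_A_iff (n : ℕ) [NeZero n] (m : ZMod (2*n)) :
    (a m : QuaternionGroup n) ∈ zpowers (a (2 : ZMod (2*n))) ↔ 2 ∣ m.val := by
  rw [← mem_powers_iff_mem_zpowers]
  constructor
  · rintro ⟨k, hk⟩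
    dsimp only at hk
    rw [QG_a_pow] at hk
    have h2 : ((k * 2 : ℕ) : ZMod (2*n)) = m := by
      simpa using hk
    have hv : m.val = (k * 2) % (2 * n) := by
      rw [← h2, ZMod.val_natCast]
    rw [hv]
    exact (Nat.dvd_mod_iff (dvd_mul_right 2 n)).mpr (dvd_mul_left 2 k)
  · rintro ⟨t, ht⟩
    refine ⟨t, ?_⟩
    show (a 2 : QuaternionGroup n) ^ t = a m
    rw [QG_a_pow]
    congr 1
    have : ((m.val : ℕ) : ZMod (2*n)) = m := by
      simp [ZMod.natCast_val, ZMod.cast_id]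
    rw [← this, ht]
    push_cast
    ring

private lemma QG_neg_n (n : ℕ) : (-(n : ZMod (2*n))) = (n : ZMod (2*n)) := by
  have h : ((2 * n : ℕ) : ZMod (2*n)) = 0 := ZMod.natCast_self _
  push_cast at h
  linear_combination -h

theorem subgroup_j_maps_isomorphically_to_quotient (n : ℕ) (hn : 1 ≤ n) (hodd : Odd n)
    [hA : (Subgroup.zpowers (QuaternionGroup.a (2 : ZMod (2 * n)))).Normal] :
    Subgroup.zpowers (QuaternionGroup.a (2 : ZMod (2 * n))) ⊓
        Subgroup.zpowers (QuaternionGroup.xa (0 : ZMod (2 * n))) = ⊥ ∧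
    Function.Bijective
      ((QuotientGroup.mk' (Subgroup.zpowers (QuaternionGroup.a (2 : ZMod (2 * n))))).comp
        (Subgroup.zpowers (QuaternionGroup.xa (0 : ZMod (2 * n)))).subtype) := by
  haveI : NeZero n := ⟨by omega⟩
  set A := Subgroup.zpowers (a (2 : ZMod (2 * n))) with hAdef
  set H := Subgroup.zpowers (xa (0 : ZMod (2 * n))) with hHdef
  -- description of powers of xa 0
  have hxa2 : (xa (0 : ZMod (2*n)) : QuaternionGroup n) ^ 2 = a n := xa_sq 0
  have hxa3 : (xa (0 : ZMod (2*n)) : QuaternionGroup n) ^ 3 = xa n := by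
    rw [pow_succ, hxa2, a_mul_xa, zero_sub, QG_neg_n]
  have hHmem : ∀ x : QuaternionGroup n, x ∈ H →
      x = 1 ∨ x = xa 0 ∨ x = a n ∨ x = xa n := by
    intro x hx
    rw [hHdef, ← mem_powers_iff_mem_zpowers] at hx
    obtain ⟨k, hk⟩ := hx
    dsimp only at hk
    rw [← pow_mod_orderOf, orderOf_xa] at hk
    have h4 : k % 4 < 4 := Nat.mod_lt _ (by norm_num)
    interval_cases h : k % 4 <;> rw [← hk] <;> simp [hxa2, hxa3]
  have hnval : ((n : ZMod (2*n))).val = n := by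
    rw [ZMod.val_natCast, Nat.mod_eq_of_lt (by omega)]
  have hinf : A ⊓ H = ⊥ := by
    rw [eq_bot_iff]
    intro x hx
    obtain ⟨hxA, hxH⟩ := Subgroup.mem_inf.mp hx
    rcases hHmem x hxH with rfl | rfl | rfl | rfl
    · exact Subgroup.mem_bot.mpr rfl
    · exfalso
      rw [hAdef, ← mem_powers_iff_mem_zpowers] at hxA
      obtain ⟨k, hk⟩ := hxA
      dsimp only at hk
      rw [QG_a_pow] at hk
      cases hk
    · exfalso
      rw [hAdef, QG_mem_A_iff, hnval] at hxA
      obtain ⟨t, ht⟩ := hxA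
      obtain ⟨s, hs⟩ := hodd
      omega
    · exfalso
      rw [hAdef, ← mem_powers_iff_mem_zpowers] at hxA
      obtain ⟨k, hk⟩ := hxA
      dsimp only at hk
      rw [QG_a_pow] at hk
      cases hk
  refine ⟨hinf, ?_, ?_⟩
  · rw [← MonoidHom.ker_eq_bot_iff]
    rw [eq_bot_iff]
    rintro ⟨x, hxH⟩ hx
    have hxA : x ∈ A := by
      rw [MonoidHom.mem_ker, MonoidHom.comp_apply] at hx
      rwa [← QuotientGroup.ker_mk' A, MonoidHom.mem_ker]
    have : x ∈ A ⊓ H := ⟨hxA, hxH⟩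
    rw [hinf, Subgroup.mem_bot] at this
    simpa [Subgroup.mem_bot] using this
  · intro q
    obtain ⟨x, rfl⟩ := QuotientGroup.mk'_surjective A q
    have key : ∀ (g h : QuaternionGroup n), h ∈ H → g ∈ A → x = g * h →
        ∃ y : H, (QuotientGroup.mk' A).comp H.subtype y = QuotientGroup.mk' A x := by
      rintro g h hh hg rfl
      refine ⟨⟨h, hh⟩, ?_⟩
      simp only [MonoidHom.comp_apply, Subgroup.coe_subtype, map_mul]
      have h1 : (QuotientGroup.mk' A) g = 1 := (QuotientGroup.eq_one_iff g).mpr hg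
      rw [h1, one_mul]
    rcases x with i | i
    · rcases Nat.even_or_odd i.val with he | ho
      · exact key (a i) 1 (one_mem H) ((QG_mem_A_iff n i).mpr he.two_dvd) (mul_one _).symm
      · refine key (a (i + n)) (a n) (hxa2 ▸ pow_mem (mem_zpowers _) 2) ?_ ?_
        · rw [QG_mem_A_iff]
          have hv : ((i + n : ZMod (2*n))).val = (i.val + n) % (2 * n) := by
            rw [ZMod.val_add, hnval]
          rw [hv]
          refine (Nat.dvd_mod_iff (dvd_mul_right 2 n)).mpr ?_
          obtain ⟨s, hs⟩ := hodd
          obtain ⟨c, hc⟩ := ho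
          omega
        · rw [a_mul_a]
          congr 1
          have h0 : ((n : ZMod (2*n)) + n) = 0 := by
            have h := ZMod.natCast_self (2*n)
            push_cast at h
            linear_combination h
          rw [add_assoc, h0, add_zero]
    · have hine : i.val < 2 * n := i.val_lt
      rcases Nat.even_or_odd i.val with he | ho
      · refine key (a (-i)) (xa 0) (mem_zpowers _) ?_ ?_
        · rw [QG_mem_A_iff, ZMod.neg_val]
          obtain ⟨b, hb⟩ := he
          have hs : 2 * n = n + n := by ring
          split <;> omega
        · rw [a_mul_xa, zero_sub, neg_neg]
      · have hi0 : i ≠ 0 := by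
          intro h; rw [h] at ho; simp [ZMod.val_zero] at ho
        refine key (a ((n : ZMod (2*n)) + -i)) (xa n) (hxa3 ▸ pow_mem (mem_zpowers _) 3) ?_ ?_
        · rw [QG_mem_A_iff]
          have hv : ((n : ZMod (2*n)) + -i).val = (n + (-i).val) % (2 * n) := by
            rw [ZMod.val_add, hnval]
          rw [ZMod.neg_val, if_neg hi0] at hv
          rw [hv]
          refine (Nat.dvd_mod_iff (dvd_mul_right 2 n)).mpr ?_
          obtain ⟨s, hs⟩ := hodd
          obtain ⟨c, hc⟩ := ho
          omega
        · rw [a_mul_xa]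
          congr 1
          ring
end

section
/- For every n ≥ 1 there is a well-defined action of the generalized quaternion group Q_{4n} on the set (ℤ/2n) × (ℤ/2n) determined by ε·(p, q) = (p + 1, q − 1) and j·(p, q) = (q + n, p), and this action is free: for every g ∈ Q_{4n} with g ≠ 1 and every (p, q) ∈ (ℤ/2n) × (ℤ/2n), g·(p, q) ≠ (p, q). -/
/- STATEMENT 13: For every n ≥ 1 there is a well-defined action of Q_{4n} on
(ℤ/2n) × (ℤ/2n) with ε·(p,q) = (p+1, q−1) and j·(p,q) = (q+n, p), and this action is
free. -/

theorem quaternionGroup_action_on_labels_free (n : ℕ) (hn : 1 ≤ n) :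
    ∃ act : QuaternionGroup n → ZMod (2 * n) × ZMod (2 * n) → ZMod (2 * n) × ZMod (2 * n),
      (∀ x, act 1 x = x) ∧
      (∀ g h x, act (g * h) x = act g (act h x)) ∧
      (∀ x : ZMod (2 * n) × ZMod (2 * n),
        act (QuaternionGroup.a (1 : ZMod (2 * n))) x = (x.1 + 1, x.2 - 1)) ∧
      (∀ x : ZMod (2 * n) × ZMod (2 * n),
        act (QuaternionGroup.xa (0 : ZMod (2 * n))) x = (x.2 + (n : ZMod (2 * n)), x.1)) ∧
      (∀ g : QuaternionGroup n, g ≠ 1 → ∀ x, act g x ≠ x) := by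
  have h2n : (2 * n : ZMod (2 * n)) = 0 := by
    exact_mod_cast ZMod.natCast_self (2 * n)
  haveI : NeZero (2 * n) := ⟨by omega⟩
  have hnne : (n : ZMod (2 * n)) ≠ 0 := by
    rw [Ne, ZMod.natCast_eq_zero_iff]
    intro h
    have := Nat.le_of_dvd (by omega) h
    omega
  refine ⟨fun g x => match g with
    | QuaternionGroup.a i => (x.1 + i, x.2 - i)
    | QuaternionGroup.xa i => (x.2 - i + n, x.1 + i), ?_, ?_, ?_, ?_, ?_⟩
  · intro x
    show (x.1 + 0, x.2 - 0) = x
    simp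
  · rintro (i | i) (j | j) x <;>
      simp only [QuaternionGroup.a_mul_a, QuaternionGroup.a_mul_xa,
        QuaternionGroup.xa_mul_a, QuaternionGroup.xa_mul_xa] <;>
      refine Prod.ext ?_ ?_ <;> dsimp <;> ring_nf <;>
      linear_combination -h2n
  · intro x; rfl
  · intro x
    show (x.2 - 0 + n, x.1 + 0) = _
    simp
  · rintro (i | i) hg ⟨p, q⟩ h
    · have hi : i ≠ 0 := by
        intro h0; exact hg (by rw [h0]; rfl)
      have := congrArg Prod.fst h
      dsimp at this
      exact hi (by linear_combination this)
    · have h1 := congrArg Prod.fst h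
      have h2 := congrArg Prod.snd h
      dsimp at h1 h2
      exact hnne (by linear_combination h1 + h2)
end

section
/- Let n = 2k − 1 ≥ 3 be an odd integer and let ω = exp(2πi/n) ∈ ℂ be a primitive n-th root of unity. Then for all integers a and c, the origin 0 lies in the convex hull (over ℝ) of the three points {ω^a, ω^{a+1}, ω^c} in ℂ if and only if c ≡ a + k (mod n). -/
/- STATEMENT 14: Let n = 2k − 1 ≥ 3 and ω = exp(2πi/n). For all integers a, c:
0 ∈ conv_ℝ{ω^a, ω^{a+1}, ω^c} iff c ≡ a + k (mod n). -/

open Complex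

private lemma omega_zpow_congr (n : ℕ) (hn : 0 < n) {s t : ℤ}
    (h : s ≡ t [ZMOD (n : ℤ)]) :
    (Complex.exp (2 * Real.pi * Complex.I / n)) ^ s
      = (Complex.exp (2 * Real.pi * Complex.I / n)) ^ t := by
  set ω : ℂ := Complex.exp (2 * Real.pi * Complex.I / n) with hω
  have hω0 : ω ≠ 0 := Complex.exp_ne_zero _
  obtain ⟨j, hj⟩ := h.dvd
  have ht : t = s + (n : ℤ) * j := by linarith
  have hωn : ω ^ ((n : ℤ)) = 1 := by
    rw [hω, ← Complex.exp_int_mul]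
    have hne : (n : ℂ) ≠ 0 := by exact_mod_cast Nat.cast_ne_zero.mpr hn.ne'
    rw [show ((n : ℤ) : ℂ) * (2 * Real.pi * Complex.I / n) = 2 * Real.pi * Complex.I by
      push_cast; field_simp]
    exact Complex.exp_two_pi_mul_I
  rw [ht, zpow_add₀ hω0, zpow_mul, hωn, one_zpow, mul_one]

private lemma re_exp_pos (k n : ℕ) (hk : 2 ≤ k) (hn : n = 2 * k - 1) (a : ℤ) (e : ℤ)
    (j : ℤ) (hj : |2 * j - e| ≤ (k : ℤ) - 1) :
    0 < (Complex.exp (-(((2 * a + e) * Real.pi / n : ℝ)) * Complex.I)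
        * (Complex.exp (2 * Real.pi * Complex.I / n)) ^ (a + j)).re := by
  have hn3 : 3 ≤ n := by omega
  have hnR : (0 : ℝ) < n := by exact_mod_cast (by omega : 0 < n)
  have hnC : (n : ℂ) ≠ 0 := by exact_mod_cast hnR.ne'
  have hnval : (n : ℝ) = 2 * (k : ℝ) - 1 := by
    have h1 : (n : ℕ) + 1 = 2 * k := by omega
    have h2 := congrArg (Nat.cast : ℕ → ℝ) h1
    push_cast at h2
    linarith
  have hpow : (Complex.exp (2 * Real.pi * Complex.I / n)) ^ (a + j)
      = Complex.exp (((a + j : ℤ) : ℂ) * (2 * Real.pi * Complex.I / n)) :=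
    (Complex.exp_int_mul _ _).symm
  rw [hpow, ← Complex.exp_add]
  have harg : (-(((2 * a + e) * Real.pi / n : ℝ) : ℂ) * Complex.I
      + ((a + j : ℤ) : ℂ) * (2 * Real.pi * Complex.I / n))
      = ((((2 * j - e : ℤ) : ℝ) * Real.pi / n : ℝ) : ℂ) * Complex.I := by
    push_cast
    field_simp
    ring
  rw [harg, Complex.exp_ofReal_mul_I_re]
  apply Real.cos_pos_of_mem_Ioo
  have hd : |((2 * j - e : ℤ) : ℝ)| ≤ (k : ℝ) - 1 := by
    rw [← Int.cast_abs]
    exact_mod_cast hj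
  have habs : |((2 * j - e : ℤ) : ℝ) * Real.pi / n| < Real.pi / 2 := by
    rw [abs_div, abs_mul, abs_of_pos Real.pi_pos, abs_of_pos hnR, div_lt_iff₀ hnR]
    nlinarith [Real.pi_pos, hd, hnval, abs_nonneg ((2 * j - e : ℤ) : ℝ)]
  constructor
  · linarith [(abs_lt.mp habs).1]
  · linarith [(abs_lt.mp habs).2]

theorem zero_mem_convexHull_roots_of_unity_iff
    (k : ℕ) (hk : 2 ≤ k) (n : ℕ) (hn : n = 2 * k - 1) (a c : ℤ) :
    (0 : ℂ) ∈ convexHull ℝ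
        ({(Complex.exp (2 * Real.pi * Complex.I / n)) ^ a,
          (Complex.exp (2 * Real.pi * Complex.I / n)) ^ (a + 1),
          (Complex.exp (2 * Real.pi * Complex.I / n)) ^ c} : Set ℂ) ↔
      c ≡ a + (k : ℤ) [ZMOD (n : ℤ)] := by
  have hn3 : 3 ≤ n := by omega
  have hnpos : 0 < n := by omega
  have hnR : (0 : ℝ) < n := by exact_mod_cast hnpos
  have hnC : (n : ℂ) ≠ 0 := by exact_mod_cast hnR.ne'
  set ω : ℂ := Complex.exp (2 * Real.pi * Complex.I / n) with hωdef
  have hω0 : ω ≠ 0 := Complex.exp_ne_zero _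
  constructor
  · -- hard direction: separation
    intro h0
    by_contra hne
    set m : ℤ := (c - a) % (n : ℤ) with hmdef
    have hm0 : 0 ≤ m := Int.emod_nonneg _ (by exact_mod_cast hnpos.ne')
    have hmn : m < (n : ℤ) := Int.emod_lt_of_pos _ (by exact_mod_cast hnpos)
    have hcm : c ≡ a + m [ZMOD (n : ℤ)] := by
      have h2 : m ≡ c - a [ZMOD (n : ℤ)] := Int.emod_emod_of_dvd (c - a) dvd_rfl
      have h3 := h2.symm.add_left a
      rwa [show a + (c - a) = c by ring] at h3
    have hmk : m ≠ (k : ℤ) := fun hmk => hne (by rw [hmk] at hcm; exact hcm)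
    set m' : ℤ := if m ≤ (k : ℤ) - 1 then m else m - n with hm'def
    set e : ℤ := if m ≤ (k : ℤ) - 1 then (k : ℤ) - 1 else 3 - k with hedef
    have hcm' : c ≡ a + m' [ZMOD (n : ℤ)] := by
      rcases le_or_gt m ((k : ℤ) - 1) with h | h
      · rw [hm'def, if_pos h]; exact hcm
      · rw [hm'def, if_neg (not_le.mpr h)]
        refine hcm.trans ?_
        show (a + m) % (n : ℤ) = (a + (m - (n : ℤ))) % (n : ℤ)
        rw [show a + (m - (n : ℤ)) = (a + m) - (n : ℤ) by ring, Int.sub_emod,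
          Int.emod_self, sub_zero, Int.emod_emod_of_dvd _ dvd_rfl]
    have hnz : (n : ℤ) = 2 * (k : ℤ) - 1 := by omega
    have hb0 : |2 * (0 : ℤ) - e| ≤ (k : ℤ) - 1 := by
      rcases le_or_gt m ((k : ℤ) - 1) with h | h
      · rw [hedef, if_pos h, abs_le]; omega
      · rw [hedef, if_neg (not_le.mpr h), abs_le]; omega
    have hb1 : |2 * (1 : ℤ) - e| ≤ (k : ℤ) - 1 := by
      rcases le_or_gt m ((k : ℤ) - 1) with h | h
      · rw [hedef, if_pos h, abs_le]; omega
      · rw [hedef, if_neg (not_le.mpr h), abs_le]; omega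
    have hbm : |2 * m' - e| ≤ (k : ℤ) - 1 := by
      rcases le_or_gt m ((k : ℤ) - 1) with h | h
      · rw [hedef, if_pos h, hm'def, if_pos h, abs_le]; omega
      · rw [hedef, if_neg (not_le.mpr h), hm'def, if_neg (not_le.mpr h), abs_le]
        omega
    set u : ℂ := Complex.exp (-(((2 * a + e) * Real.pi / n : ℝ)) * Complex.I) with hudef
    have hCconv : Convex ℝ {z : ℂ | 0 < (u * z).re} := by
      refine convex_halfSpace_gt ?_ 0
      constructor
      · intro x y; simp [mul_add]
      · intro t x
        simp only [Complex.real_smul, smul_eq_mul]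
        rw [mul_left_comm, Complex.re_ofReal_mul]
    have hsub : ({ω ^ a, ω ^ (a + 1), ω ^ c} : Set ℂ) ⊆ {z : ℂ | 0 < (u * z).re} := by
      intro z hz
      rcases hz with hz | hz | hz
      · rw [hz, hudef, hωdef]
        have h := re_exp_pos k n hk hn a e 0 hb0
        rw [add_zero] at h
        exact h
      · rw [hz, hudef, hωdef]
        exact re_exp_pos k n hk hn a e 1 hb1
      · rw [Set.mem_singleton_iff] at hz
        rw [hz, omega_zpow_congr n hnpos hcm']
        exact re_exp_pos k n hk hn a e m' hbm
    have h1 := convexHull_min hsub hCconv h0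
    simp at h1
  · -- easy direction: explicit convex combination
    intro hmod
    have hcak : ω ^ c = ω ^ (a + (k : ℤ)) := omega_zpow_congr n hnpos hmod
    set uu : ℂ := Complex.exp (Real.pi * Complex.I / n) with huu
    have huu0 : uu ≠ 0 := Complex.exp_ne_zero _
    have hωuu : ω = uu * uu := by
      rw [hωdef, huu, ← Complex.exp_add]
      congr 1
      ring
    have hnval : (n : ℂ) = 2 * (k : ℂ) - 1 := by
      have h1 : (n : ℕ) + 1 = 2 * k := by omega
      have h2 := congrArg (Nat.cast : ℕ → ℂ) h1
      push_cast at h2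
      linear_combination h2
    have hωk : ω ^ ((k : ℤ)) = -uu := by
      rw [hωdef, ← Complex.exp_int_mul]
      have hcast : ((k : ℤ) : ℂ) * (2 * Real.pi * Complex.I / n)
          = Real.pi * Complex.I + Real.pi * Complex.I / n := by
        field_simp
        push_cast
        linear_combination (-1 : ℂ) * hnval
      rw [hcast, Complex.exp_add, Complex.exp_pi_mul_I, huu]
      ring
    set s : ℝ := 2 * Real.cos (Real.pi / n) with hsdef
    have hspos : 0 < s := by
      have hc : 0 < Real.cos (Real.pi / n) := by
        apply Real.cos_pos_of_mem_Ioo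
        constructor
        · have h1 : 0 < Real.pi / n := div_pos Real.pi_pos hnR
          linarith [Real.pi_pos]
        · rw [div_lt_div_iff₀ hnR (by norm_num : (0:ℝ) < 2)]
          have h3 : (3 : ℝ) ≤ (n : ℝ) := by exact_mod_cast hn3
          nlinarith [Real.pi_pos]
      rw [hsdef]; linarith
    have hc2 : ∀ z : ℂ, 2 * Complex.cos z = Complex.exp (z * Complex.I)
        + Complex.exp (-z * Complex.I) := by
      intro z
      rw [Complex.cos]
      ring
    have hcosC : ((s : ℝ) : ℂ) = uu + uu⁻¹ := by
      rw [hsdef]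
      push_cast [Complex.ofReal_cos]
      rw [hc2, huu, ← Complex.exp_neg]
      congr 2 <;> push_cast <;> ring
    have hinner : (1 : ℂ) + ω + (s : ℂ) * ω ^ ((k : ℤ)) = 0 := by
      rw [hωk, hcosC, hωuu]
      field_simp
      ring
    have hkey : ω ^ a + ω ^ (a + 1) + (s : ℂ) * ω ^ (a + (k : ℤ)) = 0 := by
      rw [zpow_add₀ hω0 a 1, zpow_add₀ hω0 a ((k : ℤ)), zpow_one]
      calc ω ^ a + ω ^ a * ω + (s : ℂ) * (ω ^ a * ω ^ ((k : ℤ)))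
          = ω ^ a * (1 + ω + (s : ℂ) * ω ^ ((k : ℤ))) := by ring
        _ = 0 := by rw [hinner, mul_zero]
    set S : Set ℂ := {ω ^ a, ω ^ (a + 1), ω ^ c} with hSdef
    have hp : ω ^ a ∈ S := Set.mem_insert _ _
    have hq : ω ^ (a + 1) ∈ S := Set.mem_insert_of_mem _ (Set.mem_insert _ _)
    have hr : ω ^ c ∈ S := Set.mem_insert_of_mem _ (Set.mem_insert_of_mem _ rfl)
    have hx : ((1:ℝ)/2) • ω ^ a + ((1:ℝ)/2) • ω ^ (a + 1) ∈ convexHull ℝ S :=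
      (convex_convexHull ℝ S) (subset_convexHull ℝ S hp) (subset_convexHull ℝ S hq)
        (by norm_num) (by norm_num) (by norm_num)
    set t : ℝ := 2 / (2 + s) with htdef
    have h2s : (0:ℝ) < 2 + s := by linarith
    have ht0 : 0 ≤ t := by positivity
    have ht1 : 0 ≤ 1 - t := by
      rw [htdef]
      rw [sub_nonneg, div_le_one h2s]
      linarith
    have htR : t * (2 + s) = 2 := by
      rw [htdef]; field_simp
    have htC : (t : ℂ) * (2 + (s : ℂ)) = 2 := by exact_mod_cast htR
    have hmem := (convex_convexHull ℝ S) hx (subset_convexHull ℝ S hr)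
      ht0 ht1 (by ring)
    have heq : t • (((1:ℝ)/2) • ω ^ a + ((1:ℝ)/2) • ω ^ (a + 1)) + (1 - t) • ω ^ c
        = 0 := by
      rw [hcak]
      simp only [Complex.real_smul]
      push_cast
      linear_combination ((t : ℂ)/2) * hkey - (ω ^ (a + (k : ℤ)) / 2) * htC
    rwa [heq] at hmem
end

section
/- Let p, q, r be positive integers with p + q + r = n, and partition the index set {1,…,n} into the consecutive blocks B₁ = {1,…,p}, B₂ = {p+1,…,p+q}, B₃ = {p+q+1,…,n}. Let v_i = e_i − (1/n)·(e₁ + ⋯ + eₙ) ∈ ℝⁿ for i = 1,…,n (the vertices of the regular simplex centered at the origin in the hyperplane of vectors with zero coordinate sum), and let L = {x ∈ ℝⁿ : Σ_{i ∈ B₁} x_i = 0, Σ_{i ∈ B₂} x_i = 0, Σ_{i ∈ B₃} x_i = 0}. Then for every nonempty subset S ⊆ {1,…,n}, the convex hull of {v_i : i ∈ S} intersects L if and only if S has nonempty intersection with each of the blocks B₁, B₂ and B₃. -/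
/- STATEMENT 15: Let p, q, r > 0 with p + q + r = n, with the three consecutive blocks
B₁, B₂, B₃ partitioning the index set (0-based: B₁ = [0,p), B₂ = [p,p+q), B₃ = [p+q,n)).
Let v_i = e_i − (1/n)(e₁ + ⋯ + eₙ) and let L be the subspace of ℝⁿ where the three block
sums vanish. For every nonempty S ⊆ {1,…,n}: conv{v_i : i ∈ S} meets L iff S meets each of
B₁, B₂, B₃. -/

noncomputable section

/-- v_i = e_i − (1/n)·(e₁ + ⋯ + eₙ). -/
def vtx (n : ℕ) (i : Fin n) : Fin n → ℝ :=
  fun j => (if i = j then (1 : ℝ) else 0) - 1 / n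

/-- The subspace L: all three block sums of coordinates vanish. -/
def Lblocks (n p q : ℕ) : Set (Fin n → ℝ) :=
  {x | (∑ j ∈ Finset.univ.filter (fun j : Fin n => (j : ℕ) < p), x j = 0) ∧
       (∑ j ∈ Finset.univ.filter (fun j : Fin n => p ≤ (j : ℕ) ∧ (j : ℕ) < p + q), x j = 0) ∧
       (∑ j ∈ Finset.univ.filter (fun j : Fin n => p + q ≤ (j : ℕ)), x j = 0)}

lemma blocksum_vtx (n : ℕ) (i : Fin n) (T : Finset (Fin n)) :
    ∑ j ∈ T, vtx n i j = (if i ∈ T then 1 else 0) - T.card / n := by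
  unfold vtx
  rw [Finset.sum_sub_distrib, Finset.sum_ite_eq, Finset.sum_const, nsmul_eq_mul]
  ring_nf

theorem convexHull_simplex_vertices_meets_L_iff
    (n p q r : ℕ) (hp : 0 < p) (hq : 0 < q) (hr : 0 < r) (hn : p + q + r = n)
    (S : Finset (Fin n)) (hS : S.Nonempty) :
    (convexHull ℝ (vtx n '' (S : Set (Fin n))) ∩ Lblocks n p q).Nonempty ↔
      ((∃ i ∈ S, (i : ℕ) < p) ∧
       (∃ i ∈ S, p ≤ (i : ℕ) ∧ (i : ℕ) < p + q) ∧
       (∃ i ∈ S, p + q ≤ (i : ℕ))) := by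
  have hn0 : 0 < n := by omega
  have hnR : (n : ℝ) ≠ 0 := Nat.cast_ne_zero.mpr hn0.ne'
  set B1 : Finset (Fin n) := Finset.univ.filter (fun j : Fin n => (j : ℕ) < p) with hB1
  set B2 : Finset (Fin n) := Finset.univ.filter (fun j : Fin n => p ≤ (j : ℕ) ∧ (j : ℕ) < p + q) with hB2
  set B3 : Finset (Fin n) := Finset.univ.filter (fun j : Fin n => p + q ≤ (j : ℕ)) with hB3
  have hmem1 : ∀ j : Fin n, j ∈ B1 ↔ (j : ℕ) < p := by
    intro j; simp [hB1]
  have hmem2 : ∀ j : Fin n, j ∈ B2 ↔ (p ≤ (j : ℕ) ∧ (j : ℕ) < p + q) := by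
    intro j; simp [hB2]
  have hmem3 : ∀ j : Fin n, j ∈ B3 ↔ p + q ≤ (j : ℕ) := by
    intro j; simp [hB3]
  have hcards : B1.card + B2.card + B3.card = n := by
    classical
    rw [Finset.card_filter, Finset.card_filter, Finset.card_filter,
        ← Finset.sum_add_distrib, ← Finset.sum_add_distrib]
    have : ∀ j : Fin n,
        ((if (j : ℕ) < p then 1 else 0) + (if p ≤ (j : ℕ) ∧ (j : ℕ) < p + q then 1 else 0))
          + (if p + q ≤ (j : ℕ) then 1 else 0) = 1 := by
      intro j; split_ifs <;> omega
    simp only [this, Finset.sum_const, Finset.card_univ, Fintype.card_fin, smul_eq_mul, mul_one]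
  have hc1 : 0 < B1.card := Finset.card_pos.mpr ⟨⟨0, hn0⟩, (hmem1 _).mpr hp⟩
  have hc2 : 0 < B2.card := Finset.card_pos.mpr ⟨⟨p, by omega⟩, (hmem2 _).mpr (by simp; omega)⟩
  have hc3 : 0 < B3.card := Finset.card_pos.mpr ⟨⟨p + q, by omega⟩, (hmem3 _).mpr (by simp)⟩
  constructor
  · rintro ⟨x, hxc, hx1, hx2, hx3⟩
    rw [show vtx n '' (S : Set (Fin n)) = ((S.image (vtx n) : Finset (Fin n → ℝ)) : Set (Fin n → ℝ)) by
          simp [Finset.coe_image], Finset.mem_convexHull] at hxc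
    obtain ⟨w, hw0, hw1, hwx⟩ := hxc
    have hx : ∀ j, x j = ∑ y ∈ S.image (vtx n), w y * y j := by
      intro j
      rw [← hwx, Finset.centerMass, hw1]
      simp [Finset.sum_apply]
    have key : ∀ (T : Finset (Fin n)), (∀ i ∈ S, i ∉ T) → (∑ j ∈ T, x j) = -(T.card / n) := by
      intro T hT
      have : ∑ j ∈ T, x j = ∑ y ∈ S.image (vtx n), w y * ∑ j ∈ T, y j := by
        simp only [hx]
        rw [Finset.sum_comm]
        simp [Finset.mul_sum]
      rw [this]
      have : ∀ y ∈ S.image (vtx n), w y * ∑ j ∈ T, y j = w y * (-(T.card / n)) := by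
        intro y hy
        obtain ⟨i, hi, rfl⟩ := Finset.mem_image.mp hy
        rw [blocksum_vtx, if_neg (hT i hi)]
        ring_nf
      rw [Finset.sum_congr rfl this, ← Finset.sum_mul, hw1, one_mul]
    have hTne : ∀ (T : Finset (Fin n)), 0 < T.card → (∑ j ∈ T, x j) = 0 → ∃ i ∈ S, i ∈ T := by
      intro T hT hsum
      by_contra h
      push_neg at h
      have hk := key T h
      rw [hsum] at hk
      have hTpos : (0:ℝ) < T.card := by exact_mod_cast hT
      have hnpos : (0:ℝ) < n := by exact_mod_cast hn0
      have : (0:ℝ) < (T.card : ℝ) / n := by positivity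
      linarith
    refine ⟨?_, ?_, ?_⟩
    · obtain ⟨i, hi, hiT⟩ := hTne B1 hc1 hx1; exact ⟨i, hi, (hmem1 i).mp hiT⟩
    · obtain ⟨i, hi, hiT⟩ := hTne B2 hc2 hx2; exact ⟨i, hi, (hmem2 i).mp hiT⟩
    · obtain ⟨i, hi, hiT⟩ := hTne B3 hc3 hx3; exact ⟨i, hi, (hmem3 i).mp hiT⟩
  · rintro ⟨⟨i1, hi1S, hi1⟩, ⟨i2, hi2S, hi2⟩, ⟨i3, hi3S, hi3⟩⟩
    set a : ℝ := B1.card / n with ha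
    set b : ℝ := B2.card / n with hb
    set c : ℝ := B3.card / n with hc
    have hsum : a + b + c = 1 := by
      rw [ha, hb, hc, ← add_div, ← add_div]
      rw [div_eq_one_iff_eq hnR]
      push_cast [← hcards]; ring
    have ha0 : 0 ≤ a := by positivity
    have hb0 : 0 ≤ b := by positivity
    have hc0 : 0 ≤ c := by positivity
    set x : Fin n → ℝ := a • vtx n i1 + b • vtx n i2 + c • vtx n i3 with hxdef
    refine ⟨x, ?_, ?_⟩
    · have := Finset.centerMass_mem_convexHull (s := vtx n '' (S : Set (Fin n)))
        (Finset.univ : Finset (Fin 3)) (w := ![a, b, c])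
        (by intro i _; fin_cases i <;> assumption)
        (by rw [Fin.sum_univ_three]; simp only [Matrix.cons_val_zero, Matrix.cons_val_one,
              Matrix.head_cons, Matrix.cons_val_two, Matrix.tail_cons]; rw [hsum]; norm_num)
        (z := ![vtx n i1, vtx n i2, vtx n i3])
        (by intro i _; fin_cases i <;>
              simp only [Matrix.cons_val_zero, Matrix.cons_val_one, Matrix.head_cons,
                Matrix.cons_val_two, Matrix.tail_cons] <;>
              exact Set.mem_image_of_mem _ (by assumption))
      convert this using 1
      rw [Finset.centerMass]
      rw [Fin.sum_univ_three, Fin.sum_univ_three]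
      simp only [Matrix.cons_val_zero, Matrix.cons_val_one, Matrix.head_cons,
        Matrix.cons_val_two, Matrix.tail_cons]
      rw [hsum, inv_one, one_smul, hxdef]
    · have hxj : ∀ (T : Finset (Fin n)), ∑ j ∈ T, x j =
          a * ((if i1 ∈ T then 1 else 0) - T.card / n)
          + b * ((if i2 ∈ T then 1 else 0) - T.card / n)
          + c * ((if i3 ∈ T then 1 else 0) - T.card / n) := by
        intro T
        simp only [hxdef, Pi.add_apply, Pi.smul_apply, smul_eq_mul]
        rw [Finset.sum_add_distrib, Finset.sum_add_distrib, ← Finset.mul_sum, ← Finset.mul_sum,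
          ← Finset.mul_sum, blocksum_vtx, blocksum_vtx, blocksum_vtx]
      refine ⟨?_, ?_, ?_⟩
      · rw [hxj B1, if_pos ((hmem1 i1).mpr hi1), if_neg (fun h => by have := (hmem1 i2).mp h; omega),
          if_neg (fun h => by have := (hmem1 i3).mp h; omega), ← ha]
        linear_combination (-a) * hsum
      · rw [hxj B2, if_pos ((hmem2 i2).mpr hi2), if_neg (fun h => by have := (hmem2 i1).mp h; omega),
          if_neg (fun h => by have := (hmem2 i3).mp h; omega), ← hb]
        linear_combination (-b) * hsum
      · rw [hxj B3, if_pos ((hmem3 i3).mpr hi3), if_neg (fun h => by have := (hmem3 i1).mp h; omega),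
          if_neg (fun h => by have := (hmem3 i2).mp h; omega), ← hc]
        linear_combination (-c) * hsum


end
end
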